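/- Let G be a connected graph, I, J subsets of edges with |I| = |J|, and a, b, c, d ∈ E(G)\(I∪J) with S := I∪J∪{a,b,c,d}. Then the first Dodgson identity holds for dual Dodgson polynomials: φ^{Ia,Jb}_S · φ^{Ic,Jd}_S − φ^{Ia,Jd}_S · φ^{Ic,Jb}_S = ± φ^{I,J}_S · φ^{Iac,Jbd}_S, with sign + when (a−c)(b−d) > 0 and − otherwise. -/

import Mathlib

open scoped Classical

noncomputable section

/-- A finite multigraph with edges labelled by `Fin N`, each edge oriented
from its source `s e` to its target `t e`. -/
structure FeynGraph (N : ℕ) where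
  V : Type
  [fV : Fintype V]
  [dV : DecidableEq V]
  s : Fin N → V
  t : Fin N → V

namespace FeynGraph

variable {N : ℕ}

instance (G : FeynGraph N) : Fintype G.V := G.fV
instance (G : FeynGraph N) : DecidableEq G.V := G.dV

/-- The loop number (first Betti number) `h_G = N_G - |V| + 1` of a connected graph. -/
def loopNumber (G : FeynGraph N) : ℕ := N + 1 - Fintype.card G.V

/-- Adjacency of two vertices through an edge of the edge set `S` (ignoring orientation). -/
def Adj (G : FeynGraph N) (S : Finset (Fin N)) (u v : G.V) : Prop :=
  ∃ e ∈ S, (G.s e = u ∧ G.t e = v) ∨ (G.s e = v ∧ G.t e = u)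

/-- The subgraph with edge set `S` (and all vertices) is connected. -/
def ConnectedOn (G : FeynGraph N) (S : Finset (Fin N)) : Prop :=
  ∀ u v : G.V, Relation.ReflTransGen (G.Adj S) u v

def IsConnected (G : FeynGraph N) : Prop := G.ConnectedOn Finset.univ

/-- A spanning tree: a connected spanning subgraph with `|V| - 1` edges. -/
def IsSpanningTree (G : FeynGraph N) (T : Finset (Fin N)) : Prop :=
  G.ConnectedOn T ∧ T.card + 1 = Fintype.card G.V

/-- The dual graph polynomial `φ_G = Σ_{spanning trees T} Π_{e ∈ T} α_e`. -/
def dualPoly (G : FeynGraph N) : MvPolynomial (Fin N) ℤ :=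
  ∑ T ∈ Finset.univ.filter (fun T => G.IsSpanningTree T), ∏ e ∈ T, MvPolynomial.X e

/-- The Kirchhoff graph polynomial `Ψ_G = Σ_{spanning trees T} Π_{e ∉ T} α_e`. -/
def graphPoly (G : FeynGraph N) : MvPolynomial (Fin N) ℤ :=
  ∑ T ∈ Finset.univ.filter (fun T => G.IsSpanningTree T), ∏ e ∈ Tᶜ, MvPolynomial.X e

/-- The boundary map `∂ : ℤ^E → ℤ^V`, `e ↦ (target e) - (source e)`. -/
def bdry (G : FeynGraph N) (x : Fin N → ℤ) : G.V → ℤ := fun v =>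
  ∑ e, x e * ((if G.t e = v then 1 else 0) - (if G.s e = v then 1 else 0))

/-- `c ∈ ℤ^E` is (the pre-image of) an oriented cycle (topological loop):
its support is a cyclically ordered set of edges through distinct vertices,
with entry `+1` or `-1` according to whether the orientation of the edge
agrees with that of the cycle. -/
def IsCycleVector (G : FeynGraph N) (c : Fin N → ℤ) : Prop :=
  ∃ (n : ℕ) (_ : 0 < n) (f : Fin n → Fin N) (g : Fin n → G.V),
    Function.Injective f ∧ Function.Injective g ∧
    (∀ i : Fin n,
      (c (f i) = 1 ∧ G.s (f i) = g i ∧ G.t (f i) = g ⟨(i.val + 1) % n, Nat.mod_lt _ (Nat.lt_of_le_of_lt (Nat.zero_le _) i.isLt)⟩) ∨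
      (c (f i) = -1 ∧ G.t (f i) = g i ∧ G.s (f i) = g ⟨(i.val + 1) % n, Nat.mod_lt _ (Nat.lt_of_le_of_lt (Nat.zero_le _) i.isLt)⟩)) ∧
    (∀ e : Fin N, e ∉ Set.range f → c e = 0)

/-- A basis of small cycles: (i) each `C i` is an oriented cycle, (ii) the `C i`
generate `H_1(G,ℤ) = ker ∂`, and (iii) if `C i + Σ_{j ≠ i} λ_j C j = μ c` with
`c ∈ H_1(G,ℤ)` and `μ ≠ 0`, then `μ = ±1`. -/
def IsSmallCycleBasis (G : FeynGraph N) (C : Fin G.loopNumber → Fin N → ℤ) : Prop :=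
  (∀ i, G.IsCycleVector (C i)) ∧
  (∀ c : Fin N → ℤ, G.bdry c = 0 → c ∈ Submodule.span ℤ (Set.range C)) ∧
  (∀ (i : Fin G.loopNumber) (lam : Fin G.loopNumber → ℤ) (c : Fin N → ℤ) (μ : ℤ),
    G.bdry c = 0 → μ ≠ 0 →
    C i + ∑ j ∈ Finset.univ.erase i, lam j • C j = μ • c → μ = 1 ∨ μ = -1)

/-- `G` has a cycle (closed walk through distinct edges and distinct vertices)
of length `n`. -/
def HasCycleOfLength (G : FeynGraph N) (n : ℕ) : Prop :=
  ∃ (f : Fin n → Fin N) (g : Fin n → G.V),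
    Function.Injective f ∧ Function.Injective g ∧
    ∀ i : Fin n, (G.s (f i) = g i ∧ G.t (f i) = g ⟨(i.val + 1) % n, Nat.mod_lt _ (Nat.lt_of_le_of_lt (Nat.zero_le _) i.isLt)⟩) ∨
      (G.t (f i) = g i ∧ G.s (f i) = g ⟨(i.val + 1) % n, Nat.mod_lt _ (Nat.lt_of_le_of_lt (Nat.zero_le _) i.isLt)⟩)

/-- The matrix `L_G = [[Δ(α), F^t], [-F, 0]]`, where `F` is the cycle-edge
incidence matrix of a basis of small cycles `C`. -/
def LG (G : FeynGraph N) (C : Fin G.loopNumber → Fin N → ℤ) :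
    Matrix (Fin (N + G.loopNumber)) (Fin (N + G.loopNumber)) (MvPolynomial (Fin N) ℤ) :=
  Matrix.reindex finSumFinEquiv finSumFinEquiv
    (Matrix.fromBlocks
      (Matrix.diagonal fun e => MvPolynomial.X e)
      (Matrix.of fun e i => ((C i e : ℤ) : MvPolynomial (Fin N) ℤ))
      (Matrix.of fun i e => ((-(C i e) : ℤ) : MvPolynomial (Fin N) ℤ))
      (0 : Matrix (Fin G.loopNumber) (Fin G.loopNumber) (MvPolynomial (Fin N) ℤ)))

end FeynGraph

/-- The determinant of the minor of `M` obtained by deleting the rows indexed by `I`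
and the columns indexed by `J`, with rows and columns of the minor enumerated in
increasing order (and `0` if the sizes do not match). -/
def minorDet {R : Type} [CommRing R] {m : ℕ}
    (M : Matrix (Fin m) (Fin m) R) (I J : Finset (Fin m)) : R :=
  if h : (Iᶜ : Finset (Fin m)).card = (Jᶜ : Finset (Fin m)).card then
    Matrix.det (Matrix.of fun i j : Fin (Iᶜ : Finset (Fin m)).card =>
      M (((Iᶜ : Finset (Fin m)).orderIsoOfFin rfl i).1)
        (((Jᶜ : Finset (Fin m)).orderIsoOfFin h.symm j).1))
  else 0

namespace FeynGraph

/-- The dual Dodgson polynomial `φ^{I,J}_{G,K} = det L_G(I,J)|_{α_K = 0}`: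
the determinant of `L_G` with the rows labelled by the edges of `I` and the
columns labelled by the edges of `J` deleted, and the variables of `K` set to zero. -/
def dualDodgson {N : ℕ} (G : FeynGraph N) (C : Fin G.loopNumber → Fin N → ℤ)
    (I J K : Finset (Fin N)) : MvPolynomial (Fin N) ℤ :=
  MvPolynomial.aeval
    (fun e => if e ∈ K then (0 : MvPolynomial (Fin N) ℤ) else MvPolynomial.X e)
    (minorDet (G.LG C) (I.image (Fin.castAdd G.loopNumber)) (J.image (Fin.castAdd G.loopNumber)))

/-- Edges `e1 e2 e3` form a triangle on distinct vertices `u v w`, with the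
edges oriented consistently along the triangle. -/
def HasOrientedTriangle (G : FeynGraph N) (e1 e2 e3 : Fin N) : Prop :=
  ∃ u v w : G.V, u ≠ v ∧ v ≠ w ∧ u ≠ w ∧
    G.s e1 = u ∧ G.t e1 = v ∧ G.s e2 = v ∧ G.t e2 = w ∧ G.s e3 = w ∧ G.t e3 = u

/-- Edges `e1 e2 e3 e4` bound a 4-face (a 4-cycle on distinct vertices), with
`e1, e2` adjacent and `e1, e3` opposite, oriented consistently along the face. -/
def HasOrientedQuadFace (G : FeynGraph N) (e1 e2 e3 e4 : Fin N) : Prop :=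
  ∃ p q r s : G.V, p ≠ q ∧ p ≠ r ∧ p ≠ s ∧ q ≠ r ∧ q ≠ s ∧ r ≠ s ∧
    G.s e1 = p ∧ G.t e1 = q ∧ G.s e2 = q ∧ G.t e2 = r ∧
    G.s e3 = r ∧ G.t e3 = s ∧ G.s e4 = s ∧ G.t e4 = p

end FeynGraph

/-- `[f_1,…,f_k]_q`: the number of `F_q`-rational common zeros in `F^n` of a finite
set of integer polynomials (coefficients reduced to the finite field `F`). -/
def countZeros (F : Type) [Field F] [Fintype F] {n : ℕ}
    (S : Finset (MvPolynomial (Fin n) ℤ)) : ℕ :=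
  Nat.card {x : Fin n → F // ∀ p ∈ S, MvPolynomial.aeval x p = 0}

end

/-!
The dual Dodgson polynomials are minors of the one matrix `L_G`, evaluated at `α_S = 0`, so
the identity is the Desnanot–Jacobi (Dodgson condensation) identity for minors of `L_G`, pushed
through that evaluation.

For Desnanot–Jacobi, let `C` be the identity matrix with rows `i, k` replaced by rows `j, l` of
`adj M`. Since `adj M * M = det M • 1`, the product `C * M` is `M` with rows `i, k` replaced by
`det M` times the unit vectors `e_j, e_l`, while `det C` is a `2 × 2` minor of `adj M`. Taking
determinants gives the identity multiplied by `det M`; this factor cancels for the generic matrix,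
whose determinant is a nonzero polynomial. Expanding the row-replaced determinants along the unit
rows turns them into minors, with signs governed by the relative position of the deleted rows and
columns.
-/

open Matrix

namespace Matrix
variable {R : Type*} [CommRing R] {n : Type*} [Fintype n] [DecidableEq n]

theorem det_one_updateRow_updateRow {i k : n} (hik : i ≠ k) (u v : n → R) :
    det (((1 : Matrix n n R).updateRow i u).updateRow k v) = u i * v k - u k * v i := by
  let E : Matrix n (Fin 2) R := (1 : Matrix n n R).submatrix (Equiv.refl n) ![i, k]
  let W : Matrix (Fin 2) n R := of ![u - Pi.single i 1, v - Pi.single k 1]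
  have hEW : ((1 : Matrix n n R).updateRow i u).updateRow k v = 1 + E * W := by
    ext p q
    rcases eq_or_ne p k with rfl | hpk
    · simp [E, W, mul_apply, one_apply, hik.symm, Pi.single_apply, eq_comm]
    rcases eq_or_ne p i with rfl | hpi
    · simp [E, W, mul_apply, one_apply, hpk, Pi.single_apply, eq_comm]
    · simp [E, W, mul_apply, one_apply, hpk, hpi]
  rw [hEW, det_one_add_mul_comm, mul_submatrix_one, det_fin_two]
  simp [W, hik, hik.symm]

theorem det_mul_det_mul_det_updateRow_updateRow (M : Matrix n n R) {i k : n} (hik : i ≠ k)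
    (j l : n) :
    M.det * (M.det * ((M.updateRow i (Pi.single j 1)).updateRow k (Pi.single l 1)).det) =
      M.det * ((M.updateRow i (Pi.single j 1)).det * (M.updateRow k (Pi.single l 1)).det -
        (M.updateRow i (Pi.single l 1)).det * (M.updateRow k (Pi.single j 1)).det) := by
  let C := ((1 : Matrix n n R).updateRow i (adjugate M j)).updateRow k (adjugate M l)
  have hCM : C * M =
      (M.updateRow i (M.det • Pi.single j 1)).updateRow k (M.det • Pi.single l 1) := by
    have hrow : ∀ p, (M.det • (1 : Matrix n n R)) p = M.det • Pi.single p 1 := fun p => by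
      ext q; simp [one_eq_pi_single]
    simp only [C, updateRow_mul, one_mul, ← mul_apply_eq_vecMul, adjugate_mul, hrow]
  have h := congrArg det hCM
  rw [det_mul, det_one_updateRow_updateRow hik, det_updateRow_smul, updateRow_comm _ hik,
    det_updateRow_smul, updateRow_comm _ hik.symm] at h
  simp only [adjugate_apply] at h
  linear_combination -h

theorem _root_.RingHom.mapMatrix_updateRow_single {S : Type*} [CommRing S] (f : R →+* S)
    (A : Matrix n n R) (i j : n) :
    f.mapMatrix (A.updateRow i (Pi.single j 1)) = (f.mapMatrix A).updateRow i (Pi.single j 1) := by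
  ext p q
  rcases eq_or_ne p i with rfl | h <;> simp [Pi.single_apply, apply_ite f, *]

theorem det_mul_det_updateRow_updateRow (M : Matrix n n R) {i k : n} (hik : i ≠ k) (j l : n) :
    M.det * ((M.updateRow i (Pi.single j 1)).updateRow k (Pi.single l 1)).det =
      (M.updateRow i (Pi.single j 1)).det * (M.updateRow k (Pi.single l 1)).det -
        (M.updateRow i (Pi.single l 1)).det * (M.updateRow k (Pi.single j 1)).det := by
  have generic := mul_left_cancel₀ (det_mvPolynomialX_ne_zero n ℤ)
    (det_mul_det_mul_det_updateRow_updateRow (mvPolynomialX n n ℤ) hik j l)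
  let φ : MvPolynomial (n × n) ℤ →+* R :=
    (MvPolynomial.aeval fun p : n × n => M p.1 p.2).toRingHom
  have hφ : φ.mapMatrix (mvPolynomialX n n ℤ) = M := mvPolynomialX_mapMatrix_aeval ℤ M
  simpa only [map_mul, map_sub, RingHom.map_det, RingHom.mapMatrix_updateRow_single, hφ]
    using congrArg φ generic

theorem submatrix_updateRow_of_injective {α l m' n' o : Type*} [DecidableEq l] [DecidableEq m']
    (A : Matrix m' n' α) {f : l → m'} (hf : Function.Injective f) (g : o → n') (k : l)
    (v : n' → α) :
    (A.updateRow (f k) v).submatrix f g = (A.submatrix f g).updateRow k (v ∘ g) := by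
  ext x y
  rcases eq_or_ne x k with rfl | h <;> simp [hf.ne, *]

theorem det_updateRow_single_eq_neg_one_pow_mul {m : ℕ}
    (A : Matrix (Fin (m + 1)) (Fin (m + 1)) R) (i j : Fin (m + 1)) :
    (A.updateRow i (Pi.single j 1)).det =
      (-1) ^ (i + j : ℕ) * (A.submatrix i.succAbove j.succAbove).det := by
  rw [← adjugate_apply, adjugate_fin_succ_eq_det_submatrix]

theorem det_updateRow_single_updateRow_single_succAbove {m : ℕ}
    (A : Matrix (Fin (m + 2)) (Fin (m + 2)) R) (i j : Fin (m + 2)) (k₀ l₀ : Fin (m + 1)) :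
    ((A.updateRow i (Pi.single j 1)).updateRow (i.succAbove k₀)
        (Pi.single (j.succAbove l₀) 1)).det =
      (-1) ^ (i + j : ℕ) * ((-1) ^ (k₀ + l₀ : ℕ) *
        (A.submatrix (i.succAbove ∘ k₀.succAbove) (j.succAbove ∘ l₀.succAbove)).det) := by
  have hsingle : Pi.single (j.succAbove l₀) (1 : R) ∘ j.succAbove = Pi.single l₀ 1 := by
    ext y; simp [Pi.single_apply, Fin.succAbove_right_injective.eq_iff]
  rw [updateRow_comm _ (Fin.ne_succAbove i k₀), det_updateRow_single_eq_neg_one_pow_mul,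
    submatrix_updateRow_of_injective _ Fin.succAbove_right_injective,
    hsingle, det_updateRow_single_eq_neg_one_pow_mul, submatrix_submatrix]

theorem _root_.Fin.neg_one_pow_succAbove_add {m : ℕ} (p : Fin (m + 1)) (x : Fin m) :
    (-1 : R) ^ ((p.succAbove x : ℕ) + x) = if p < p.succAbove x then -1 else 1 := by
  rcases lt_or_ge (Fin.castSucc x) p with h | h
  · rw [Fin.succAbove_of_castSucc_lt _ _ h, if_neg (not_lt.2 h.le), Fin.val_castSucc]
    exact Even.neg_one_pow ⟨x, rfl⟩
  · rw [Fin.succAbove_of_le_castSucc _ _ h, if_pos (h.trans_lt (Fin.castSucc_lt_succ)),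
      Fin.val_succ]
    exact Odd.neg_one_pow ⟨x, by ring⟩

theorem det_submatrix_succAbove_desnanot_jacobi {m : ℕ}
    (M : Matrix (Fin (m + 2)) (Fin (m + 2)) R) (i j : Fin (m + 2)) (k₀ l₀ : Fin (m + 1)) :
    (M.submatrix i.succAbove j.succAbove).det *
        (M.submatrix (i.succAbove k₀).succAbove (j.succAbove l₀).succAbove).det -
      (M.submatrix i.succAbove (j.succAbove l₀).succAbove).det *
        (M.submatrix (i.succAbove k₀).succAbove j.succAbove).det =
    (if (i < i.succAbove k₀ ↔ j < j.succAbove l₀) then 1 else -1) *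
      (M.det *
        (M.submatrix (i.succAbove ∘ k₀.succAbove) (j.succAbove ∘ l₀.succAbove)).det) := by
  have h := det_mul_det_updateRow_updateRow M (Fin.ne_succAbove i k₀) j (j.succAbove l₀)
  rw [det_updateRow_single_updateRow_single_succAbove] at h
  simp only [det_updateRow_single_eq_neg_one_pow_mul] at h
  have hsign : (if (i < i.succAbove k₀ ↔ j < j.succAbove l₀) then 1 else -1 : R) =
      (-1) ^ ((i.succAbove k₀ : ℕ) + k₀) * (-1) ^ ((j.succAbove l₀ : ℕ) + l₀) := by
    rw [Fin.neg_one_pow_succAbove_add, Fin.neg_one_pow_succAbove_add]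
    split_ifs <;> simp_all
  rw [hsign]
  -- after multiplying `h` by this sign, every remaining sign occurs squared
  linear_combination (norm := skip)
    -(-1 : R) ^ (i + j + (i.succAbove k₀ : ℕ) + (j.succAbove l₀ : ℕ)) * h
  ring_nf
  simp [pow_mul']

end Matrix

theorem minorDet_eq_det_submatrix {R : Type} [CommRing R] {n k : ℕ}
    (M : Matrix (Fin n) (Fin n) R) {I J : Finset (Fin n)} (hI : I.card + k = n)
    (hJ : J.card + k = n) {f g : Fin k → Fin n} (hf : StrictMono f) (hg : StrictMono g)
    (hfI : ∀ x, f x ∉ I) (hgJ : ∀ y, g y ∉ J) :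
    minorDet M I J = (M.submatrix f g).det := by
  have hIc : Iᶜ.card = k := by rw [Finset.card_compl, Fintype.card_fin]; omega
  have hJc : Jᶜ.card = k := by rw [Finset.card_compl, Fintype.card_fin]; omega
  subst hIc
  rw [minorDet, dif_pos hJc.symm]
  congr 1
  ext x y
  simp only [Matrix.of_apply, Matrix.submatrix_apply, Finset.coe_orderIsoOfFin_apply]
  rw [← Finset.orderEmbOfFin_unique rfl (fun x => Finset.mem_compl.2 (hfI x)) hf,
    ← Finset.orderEmbOfFin_unique hJc (fun y => Finset.mem_compl.2 (hgJ y)) hg]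

theorem minorDet_desnanot_jacobi {R : Type} [CommRing R] {n : ℕ} (M : Matrix (Fin n) (Fin n) R)
    {I J : Finset (Fin n)} (hIJ : I.card = J.card) {a b c d : Fin n} (ha : a ∉ I) (hb : b ∉ J)
    (hc : c ∉ I) (hd : d ∉ J) (hac : a ≠ c) (hbd : b ≠ d) :
    minorDet M (insert a I) (insert b J) * minorDet M (insert c I) (insert d J) -
        minorDet M (insert a I) (insert d J) * minorDet M (insert c I) (insert b J) =
      (if (a < c ↔ b < d) then 1 else -1) *
        (minorDet M I J * minorDet M (insert c (insert a I)) (insert d (insert b J))) := by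
  obtain ⟨m, hmI⟩ : ∃ m, I.card + (m + 2) = n := by
    have := (insert c (insert a I)).card_le_univ
    rw [Finset.card_insert_of_notMem (by simp [hac.symm, hc]), Finset.card_insert_of_notMem ha,
      Fintype.card_fin] at this
    exact ⟨n - (I.card + 2), by omega⟩
  have hmJ : J.card + (m + 2) = n := hIJ ▸ hmI
  have hIc : Iᶜ.card = m + 2 := by rw [Finset.card_compl, Fintype.card_fin]; omega
  have hJc : Jᶜ.card = m + 2 := by rw [Finset.card_compl, Fintype.card_fin]; omega
  set e := Iᶜ.orderEmbOfFin hIc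
  set e' := Jᶜ.orderEmbOfFin hJc
  have heI : ∀ x, e x ∉ I := fun x => Finset.mem_compl.1 (Finset.orderEmbOfFin_mem _ _ x)
  have heJ : ∀ y, e' y ∉ J := fun y => Finset.mem_compl.1 (Finset.orderEmbOfFin_mem _ _ y)
  have hrange : ∀ x ∉ I, x ∈ Set.range e := fun x hx => by simpa [e] using hx
  have hrange' : ∀ y ∉ J, y ∈ Set.range e' := fun y hy => by simpa [e'] using hy
  obtain ⟨pa, rfl⟩ := hrange a ha
  obtain ⟨pc, rfl⟩ := hrange c hc
  obtain ⟨pb, rfl⟩ := hrange' b hb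
  obtain ⟨pd, rfl⟩ := hrange' d hd
  obtain ⟨k₀, rfl⟩ := Fin.exists_succAbove_eq (x := pc) (y := pa) (fun h => hac (h ▸ rfl))
  obtain ⟨l₀, rfl⟩ := Fin.exists_succAbove_eq (x := pd) (y := pb) (fun h => hbd (h ▸ rfl))
  set A := M.submatrix e e'
  have hminor : ∀ {r} {I' J' : Finset (Fin n)} {f g : Fin r → Fin (m + 2)}, StrictMono f →
      StrictMono g → I'.card + r = n → J'.card + r = n → (∀ x, e (f x) ∉ I') →
      (∀ y, e' (g y) ∉ J') → minorDet M I' J' = (A.submatrix f g).det :=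
    fun hf hg hI hJ hfI hgJ =>
      minorDet_eq_det_submatrix M hI hJ (e.strictMono.comp hf) (e'.strictMono.comp hg) hfI hgJ
  have hminor₁ : ∀ p q, minorDet M (insert (e p) I) (insert (e' q) J) =
      (A.submatrix p.succAbove q.succAbove).det := fun p q =>
    hminor (Fin.strictMono_succAbove p) (Fin.strictMono_succAbove q)
      (by rw [Finset.card_insert_of_notMem (heI p)]; omega)
      (by rw [Finset.card_insert_of_notMem (heJ q)]; omega) (by simp [heI]) (by simp [heJ])
  have hminor₀ : minorDet M I J = A.det := hminor strictMono_id strictMono_id hmI hmJ heI heJ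
  have hminor₂ : minorDet M (insert (e (pa.succAbove k₀)) (insert (e pa) I))
      (insert (e' (pb.succAbove l₀)) (insert (e' pb) J)) =
      (A.submatrix (pa.succAbove ∘ k₀.succAbove) (pb.succAbove ∘ l₀.succAbove)).det :=
    hminor ((Fin.strictMono_succAbove _).comp (Fin.strictMono_succAbove _))
      ((Fin.strictMono_succAbove _).comp (Fin.strictMono_succAbove _))
      (by simp [heI, Finset.card_insert_of_notMem]; omega)
      (by simp [heJ, Finset.card_insert_of_notMem]; omega) (by simp [heI]) (by simp [heJ])
  rw [hminor₁, hminor₁, hminor₁, hminor₁, hminor₀, hminor₂]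
  simp only [OrderEmbedding.lt_iff_lt]
  exact det_submatrix_succAbove_desnanot_jacobi A pa pb k₀ l₀

theorem statement8_general (N : ℕ) (G : FeynGraph N)
    (C : Fin G.loopNumber → Fin N → ℤ)
    (I J : Finset (Fin N)) (hIJ : I.card = J.card)
    (a b c d : Fin N) (ha : a ∉ I ∪ J) (hb : b ∉ I ∪ J) (hc : c ∉ I ∪ J)
    (hd : d ∉ I ∪ J) (hac : a ≠ c) (hbd : b ≠ d) :
    G.dualDodgson C (insert a I) (insert b J) (I ∪ J ∪ {a, b, c, d}) *
        G.dualDodgson C (insert c I) (insert d J) (I ∪ J ∪ {a, b, c, d}) -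
      G.dualDodgson C (insert a I) (insert d J) (I ∪ J ∪ {a, b, c, d}) *
        G.dualDodgson C (insert c I) (insert b J) (I ∪ J ∪ {a, b, c, d}) =
      (if ((a.val : ℤ) - c.val) * ((b.val : ℤ) - d.val) > 0 then 1 else -1) *
        (G.dualDodgson C I J (I ∪ J ∪ {a, b, c, d}) *
          G.dualDodgson C (insert c (insert a I)) (insert d (insert b J))
            (I ∪ J ∪ {a, b, c, d})) := by
  simp only [FeynGraph.dualDodgson, Finset.image_insert]
  set ι : Fin N → Fin (N + G.loopNumber) := Fin.castAdd G.loopNumber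
  have hι : StrictMono ι := Fin.strictMono_castAdd _
  rw [Finset.notMem_union] at ha hb hc hd
  have hminors := minorDet_desnanot_jacobi (G.LG C)
    (by rwa [Finset.card_image_of_injective _ hι.injective,
      Finset.card_image_of_injective _ hι.injective])
    (hι.injective.mem_finset_image.not.2 ha.1) (hι.injective.mem_finset_image.not.2 hb.2)
    (hι.injective.mem_finset_image.not.2 hc.1) (hι.injective.mem_finset_image.not.2 hd.2)
    (hι.injective.ne hac) (hι.injective.ne hbd)
  have hsign :
      ((a.val : ℤ) - c.val) * ((b.val : ℤ) - d.val) > 0 ↔ (ι a < ι c ↔ ι b < ι d) := by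
    rw [hι.lt_iff_lt, hι.lt_iff_lt, Fin.lt_def, Fin.lt_def, gt_iff_lt, mul_pos_iff]
    have := Fin.val_ne_of_ne hac
    have := Fin.val_ne_of_ne hbd
    omega
  rw [← map_mul, ← map_mul, ← map_sub, hminors]
  simp only [hsign]
  split_ifs <;> simp

/-- first Dodgson identity for dual Dodgson polynomials:
`φ^{Ia,Jb}_S φ^{Ic,Jd}_S − φ^{Ia,Jd}_S φ^{Ic,Jb}_S = ± φ^{I,J}_S φ^{Iac,Jbd}_S`,
with sign `+` when `(a−c)(b−d) > 0` and `−` otherwise, where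
`S = I ∪ J ∪ {a,b,c,d}`. -/
theorem statement8 (N : ℕ) (G : FeynGraph N) [Nonempty G.V] (hconn : G.IsConnected)
    (C : Fin G.loopNumber → Fin N → ℤ) (hC : G.IsSmallCycleBasis C)
    (I J : Finset (Fin N)) (hIJ : I.card = J.card)
    (a b c d : Fin N) (ha : a ∉ I ∪ J) (hb : b ∉ I ∪ J) (hc : c ∉ I ∪ J)
    (hd : d ∉ I ∪ J) (hab : a ≠ b) (hac : a ≠ c) (had : a ≠ d) (hbc : b ≠ c)
    (hbd : b ≠ d) (hcd : c ≠ d) :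
    G.dualDodgson C (insert a I) (insert b J) (I ∪ J ∪ {a, b, c, d}) *
        G.dualDodgson C (insert c I) (insert d J) (I ∪ J ∪ {a, b, c, d}) -
      G.dualDodgson C (insert a I) (insert d J) (I ∪ J ∪ {a, b, c, d}) *
        G.dualDodgson C (insert c I) (insert b J) (I ∪ J ∪ {a, b, c, d}) =
      (if ((a.val : ℤ) - c.val) * ((b.val : ℤ) - d.val) > 0 then 1 else -1) *
        (G.dualDodgson C I J (I ∪ J ∪ {a, b, c, d}) *
          G.dualDodgson C (insert c (insert a I)) (insert d (insert b J))
            (I ∪ J ∪ {a, b, c, d})) :=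
  statement8_general N G C I J hIJ a b c d ha hb hc hd hac hbd
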